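/- arXiv:2604.16087 — 4 statements merged into one kernel-verified Lean document; each statement's English description precedes it below -/
import Mathlib

section
/- Let (p^t)_{t≥1} be a sequence in [0,1], let s^t = Σ_{i=1}^t p^i, and let u be uniformly distributed on [0,1]. Define B^t = ⌊s^t + u⌋ − ⌊s^{t−1} + u⌋ (with s^0 = 0). Then for every t, E[B^t] = p^t, and deterministically Σ_{i=1}^t B^i ≥ ⌊s^t⌋. -/
open MeasureTheory

lemma floor_rep (a : ℝ) : ∀ u ∈ Set.Icc (0:ℝ) 1,
    ((⌊a + u⌋ : ℝ)) = (⌊a⌋ : ℝ) + Set.indicator (Set.Ici (1 - Int.fract a)) (fun _ => (1:ℝ)) u := by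
  intro u hu
  obtain ⟨hu0, hu1⟩ := hu
  have hf0 := Int.fract_nonneg a
  have hf1 := Int.fract_lt_one a
  have h1 : a + u = (⌊a⌋ : ℝ) + (Int.fract a + u) := by
    rw [Int.fract]; ring
  rw [h1, Int.floor_intCast_add]
  push_cast
  congr 1
  by_cases h : 1 - Int.fract a ≤ u
  · have : ⌊Int.fract a + u⌋ = 1 := by
      apply Int.floor_eq_iff.mpr
      constructor <;> push_cast <;> [linarith; linarith]
    simp [Set.indicator, Set.mem_Ici, h, this]
  · have : ⌊Int.fract a + u⌋ = 0 := by
      apply Int.floor_eq_iff.mpr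
      constructor <;> push_cast <;> [linarith; linarith]
    simp [Set.indicator, Set.mem_Ici, h, this]

lemma int_on (a : ℝ) : IntegrableOn (fun u => (⌊a + u⌋ : ℝ)) (Set.Icc 0 1) := by
  apply (IntegrableOn.congr_fun ?_ (fun u hu => (floor_rep a u hu).symm) measurableSet_Icc)
  apply Integrable.add (integrable_const _)
  apply Integrable.indicator (integrable_const _) measurableSet_Ici

lemma int_eq (a : ℝ) : ∫ u in Set.Icc (0:ℝ) 1, (⌊a + u⌋ : ℝ) = a := by
  rw [setIntegral_congr_fun measurableSet_Icc (floor_rep a)]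
  have hf0 := Int.fract_nonneg a
  have hf1 := Int.fract_lt_one a
  rw [integral_add (integrable_const _)
    (Integrable.indicator (integrable_const _) measurableSet_Ici)]
  rw [setIntegral_const, setIntegral_indicator measurableSet_Ici]
  have h2 : Set.Icc (0:ℝ) 1 ∩ Set.Ici (1 - Int.fract a) = Set.Icc (1 - Int.fract a) 1 := by
    ext x
    simp only [Set.mem_inter_iff, Set.mem_Icc, Set.mem_Ici]
    constructor
    · rintro ⟨⟨h1, h2⟩, h3⟩; exact ⟨h3, h2⟩
    · rintro ⟨h1, h2⟩; exact ⟨⟨by linarith, h2⟩, h1⟩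
  rw [h2, setIntegral_const]
  simp only [Real.volume_Icc, smul_eq_mul, mul_one]
  have h3 : (1:ℝ) - (1 - Int.fract a) = Int.fract a := by ring
  have h4 : (1:ℝ) - 0 = 1 := by norm_num
  rw [Real.volume_real_Icc_of_le (by linarith), Real.volume_real_Icc_of_le (by norm_num), h3, h4, one_mul]
  conv_rhs => rw [← Int.floor_add_fract a]

theorem stmt0 (p : ℕ → ℝ) (hp : ∀ t, p t ∈ Set.Icc (0:ℝ) 1)
    (s : ℕ → ℝ) (hs : ∀ t, s t = ∑ i ∈ Finset.Icc 1 t, p i) :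
    (∀ t, 1 ≤ t →
      ∫ u in Set.Icc (0:ℝ) 1, ((⌊s t + u⌋ : ℝ) - (⌊s (t-1) + u⌋ : ℝ)) = p t) ∧
    (∀ t, ∀ u ∈ Set.Icc (0:ℝ) 1,
      (⌊s t⌋ : ℤ) ≤ ∑ i ∈ Finset.Icc 1 t, (⌊s i + u⌋ - ⌊s (i-1) + u⌋)) := by
  have hs0 : s 0 = 0 := by simp [hs 0]
  constructor
  · intro t ht
    obtain ⟨t', rfl⟩ : ∃ t', t = t' + 1 := ⟨t - 1, by omega⟩
    have hstep : s (t' + 1) = s t' + p (t' + 1) := by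
      rw [hs (t' + 1), hs t', Finset.sum_Icc_succ_top (Nat.le_add_left 1 t')]
    have hsub : (t' + 1) - 1 = t' := by omega
    rw [hsub, integral_sub (int_on (s (t' + 1))) (int_on (s t')),
      int_eq (s (t' + 1)), int_eq (s t'), hstep]
    ring
  · intro t u hu
    have htel : ∀ n, ∑ i ∈ Finset.Icc 1 n, (⌊s i + u⌋ - ⌊s (i-1) + u⌋)
        = ⌊s n + u⌋ - ⌊s 0 + u⌋ := by
      intro n
      induction n with
      | zero => simp
      | succ k ih =>
        rw [Finset.sum_Icc_succ_top (Nat.le_add_left 1 k), ih]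
        have : (k + 1) - 1 = k := by omega
        rw [this]; ring
    rw [htel t, hs0, zero_add]
    have h1 : ⌊u⌋ + ⌊s t⌋ ≤ ⌊u + s t⌋ := Int.le_floor_add u (s t)
    have h2 : u + s t = s t + u := by ring
    rw [h2] at h1
    omega
end

section
/- Let x, y ∈ ℝ with 0 ≤ y − x ≤ 1 and let u be uniformly distributed on [0,1]. Then P(⌊x + u⌋ + 1 = ⌊y + u⌋) = y − x. -/
open MeasureTheory

theorem stmt1 (x y : ℝ) (h0 : 0 ≤ y - x) (h1 : y - x ≤ 1) :
    volume {u : ℝ | u ∈ Set.Icc (0:ℝ) 1 ∧ ⌊x + u⌋ + 1 = ⌊y + u⌋} =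
      ENNReal.ofReal (y - x) := by
  set n : ℤ := ⌊x⌋ with hn
  have hx : (n:ℝ) ≤ x := Int.floor_le x
  have hx' : x < n + 1 := Int.lt_floor_add_one x
  have key : ∀ u : ℝ, u ∈ Set.Icc (0:ℝ) 1 →
      (⌊x + u⌋ + 1 = ⌊y + u⌋ ↔ (⌊x+u⌋:ℝ) + 1 ≤ y + u) := by
    intro u hu
    obtain ⟨hu0, hu1⟩ := hu
    constructor
    · intro h
      have h2 := Int.floor_le (y+u)
      rw [← h] at h2
      push_cast at h2
      linarith
    · intro h
      have h2 : ⌊x+u⌋ + 1 ≤ ⌊y+u⌋ := by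
        rw [Int.le_floor]; push_cast; linarith
      have h3 : ⌊y+u⌋ < ⌊x+u⌋ + 2 := by
        rw [Int.floor_lt]; push_cast
        have := Int.lt_floor_add_one (x+u)
        linarith
      omega
  have hset : {u : ℝ | u ∈ Set.Icc (0:ℝ) 1 ∧ ⌊x + u⌋ + 1 = ⌊y + u⌋}
      = Set.Ico (max 0 ((n:ℝ)+1-y)) ((n:ℝ)+1-x)
        ∪ Set.Icc (max ((n:ℝ)+1-x) ((n:ℝ)+2-y)) 1 := by
    ext u
    simp only [Set.mem_setOf_eq, Set.mem_union, Set.mem_Ico, Set.mem_Icc,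
      max_le_iff]
    constructor
    · rintro ⟨⟨hu0, hu1⟩, hfl⟩
      rw [key u ⟨hu0, hu1⟩] at hfl
      by_cases hc : u < (n:ℝ)+1-x
      · left
        have hfloor : ⌊x+u⌋ = n := by
          rw [Int.floor_eq_iff]
          constructor <;> push_cast <;> linarith
        rw [hfloor] at hfl
        push_cast at hfl
        exact ⟨⟨hu0, by linarith⟩, hc⟩
      · right
        push_neg at hc
        have hfloor : ⌊x+u⌋ = n+1 := by
          rw [Int.floor_eq_iff]
          constructor <;> push_cast <;> linarith
        rw [hfloor] at hfl
        push_cast at hfl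
        exact ⟨⟨hc, by linarith⟩, hu1⟩
    · rintro (⟨⟨hu0, hu2⟩, hu3⟩ | ⟨⟨hu2, hu3⟩, hu1⟩)
      · have hu1 : u ≤ 1 := by linarith
        refine ⟨⟨hu0, hu1⟩, (key u ⟨hu0, hu1⟩).mpr ?_⟩
        have hfloor : ⌊x+u⌋ = n := by
          rw [Int.floor_eq_iff]; constructor <;> push_cast <;> linarith
        rw [hfloor]; push_cast; linarith
      · have hu0 : 0 ≤ u := by linarith
        refine ⟨⟨hu0, hu1⟩, (key u ⟨hu0, hu1⟩).mpr ?_⟩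
        have hfloor : ⌊x+u⌋ = n+1 := by
          rw [Int.floor_eq_iff]; constructor <;> push_cast <;> linarith
        rw [hfloor]; push_cast; linarith
  have hdisj : Disjoint (Set.Ico (max 0 ((n:ℝ)+1-y)) ((n:ℝ)+1-x))
      (Set.Icc (max ((n:ℝ)+1-x) ((n:ℝ)+2-y)) 1) := by
    refine Set.disjoint_left.mpr fun u hu hu' => ?_
    simp only [Set.mem_Ico, Set.mem_Icc, max_le_iff] at hu hu'
    linarith [hu.2, hu'.1.1]
  rw [hset, measure_union hdisj measurableSet_Icc, Real.volume_Ico, Real.volume_Icc]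
  rcases le_or_gt y ((n:ℝ)+1) with hy | hy
  · rw [max_eq_right (by linarith : (0:ℝ) ≤ (n:ℝ)+1-y)]
    have hge : (1:ℝ) ≤ max ((n:ℝ)+1-x) ((n:ℝ)+2-y) := le_max_of_le_right (by linarith)
    rw [show ENNReal.ofReal (1 - (((n:ℝ)+1-x) ⊔ ((n:ℝ)+2-y))) = 0 from
      ENNReal.ofReal_eq_zero.mpr (by linarith), add_zero]
    congr 1; ring
  · rw [max_eq_left (by linarith : (n:ℝ)+1-y ≤ 0),
      max_eq_right (by linarith : (n:ℝ)+1-x ≤ (n:ℝ)+2-y),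
      ← ENNReal.ofReal_add (by linarith) (by linarith)]
    congr 1; ring
end

section
/- For ε ∈ [−1/12, 1/12] consider the 2×2 matrix game M^ε with payoff matrix [[2/3 − ε, 1/3 + ε],[1/3, 2/3]]. Let μ ∈ Δ₂ be a min-player strategy with μ(1) ≤ 1/2. Then the exploitability gap of (μ, ν) in the game M^ε satisfies EG(μ,ν) ≥ ε/2 for any ν ∈ Δ₂, provided ε ≥ 0. -/
/-!
The game `M^ε` has value `1/2`. Against the pure column `2` the min-player's payoff is
`1/2 + ε/2 + (1/2 - μ(1)) (1/3 - ε) ≥ 1/2 + ε/2`, while the mixed row strategy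
`(p, 1 - p)` with `p (1/3 - ε) = 1/6` equalizes both columns at `1/2`, so the best response
to `ν` pays at most `1/2`. (The paper's indices `1, 2` are Lean's `0, 1`.)
-/

open Finset

noncomputable section

section BilinearGame

variable {ι κ : Type*} [Fintype ι] [Fintype κ]

def bilinPayoff (M : Matrix ι κ ℝ) (μ : ι → ℝ) (ν : κ → ℝ) : ℝ :=
  ∑ a, ∑ b, μ a * ν b * M a b

def exploitabilityGap (M : Matrix ι κ ℝ) (μ : ι → ℝ) (ν : κ → ℝ) : ℝ :=
  (⨆ ν' : stdSimplex ℝ κ, bilinPayoff M μ ν') - ⨅ μ' : stdSimplex ℝ ι, bilinPayoff M μ' ν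

theorem continuous_bilinPayoff_right (M : Matrix ι κ ℝ) (μ : ι → ℝ) :
    Continuous (bilinPayoff M μ) := by
  unfold bilinPayoff; fun_prop

theorem continuous_bilinPayoff_left (M : Matrix ι κ ℝ) (ν : κ → ℝ) :
    Continuous fun μ => bilinPayoff M μ ν := by
  unfold bilinPayoff; fun_prop

theorem bddAbove_range_bilinPayoff_stdSimplex (M : Matrix ι κ ℝ) (μ : ι → ℝ) :
    BddAbove (Set.range fun ν' : stdSimplex ℝ κ => bilinPayoff M μ ν') :=
  (isCompact_range ((continuous_bilinPayoff_right M μ).comp continuous_subtype_val)).bddAbove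

theorem bddBelow_range_bilinPayoff_stdSimplex (M : Matrix ι κ ℝ) (ν : κ → ℝ) :
    BddBelow (Set.range fun μ' : stdSimplex ℝ ι => bilinPayoff M μ' ν) :=
  (isCompact_range ((continuous_bilinPayoff_left M ν).comp continuous_subtype_val)).bddBelow

theorem bilinPayoff_sub_le_exploitabilityGap (M : Matrix ι κ ℝ) (μ : ι → ℝ) (ν : κ → ℝ)
    {μ' : ι → ℝ} (hμ' : μ' ∈ stdSimplex ℝ ι) {ν' : κ → ℝ} (hν' : ν' ∈ stdSimplex ℝ κ) :
    bilinPayoff M μ ν' - bilinPayoff M μ' ν ≤ exploitabilityGap M μ ν :=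
  sub_le_sub (le_ciSup (bddAbove_range_bilinPayoff_stdSimplex M μ) ⟨ν', hν'⟩)
    (ciInf_le (bddBelow_range_bilinPayoff_stdSimplex M ν) ⟨μ', hμ'⟩)

theorem bilinPayoff_single_right [DecidableEq κ] (M : Matrix ι κ ℝ) (μ : ι → ℝ) (j : κ) :
    bilinPayoff M μ (Pi.single j 1) = ∑ a, μ a * M a j := by
  simp [bilinPayoff, Pi.single_apply]

theorem bilinPayoff_eq_of_forall_sum_mul_eq (M : Matrix ι κ ℝ) {μ : ι → ℝ} {ν : κ → ℝ} {v : ℝ}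
    (hμ : ∀ b, ∑ a, μ a * M a b = v) (hν : ∑ b, ν b = 1) : bilinPayoff M μ ν = v :=
  calc bilinPayoff M μ ν = ∑ b, ν b * ∑ a, μ a * M a b := by
        rw [bilinPayoff, sum_comm]
        simp only [mul_sum]
        exact sum_congr rfl fun _ _ => sum_congr rfl fun _ _ => by ring
    _ = v := by simp only [hμ, ← sum_mul, hν, one_mul]

end BilinearGame

def gameMatrix (ε : ℝ) : Matrix (Fin 2) (Fin 2) ℝ :=
  ![![2/3 - ε, 1/3 + ε], ![1/3, 2/3]]

def equalizingStrategy (ε : ℝ) : Fin 2 → ℝ :=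
  ![(2 - 6 * ε)⁻¹, 1 - (2 - 6 * ε)⁻¹]

theorem equalizingStrategy_mem_stdSimplex {ε : ℝ} (hε : ε ≤ 1/6) :
    equalizingStrategy ε ∈ stdSimplex ℝ (Fin 2) := by
  have hp : (2 - 6 * ε)⁻¹ ≤ 1 := inv_le_one_of_one_le₀ (by linarith)
  have hp0 : 0 ≤ (2 - 6 * ε)⁻¹ := inv_nonneg.2 (by linarith)
  refine ⟨fun i => ?_, by simp [equalizingStrategy]⟩
  fin_cases i <;> simp [equalizingStrategy] <;> linarith

theorem sum_equalizingStrategy_mul_gameMatrix {ε : ℝ} (hε : ε < 1/3) (b : Fin 2) :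
    ∑ a, equalizingStrategy ε a * gameMatrix ε a b = 1/2 := by
  have hden : 2 - 6 * ε ≠ 0 := by linarith
  fin_cases b <;> simp [equalizingStrategy, gameMatrix] <;> field_simp <;> ring

theorem le_sum_mul_gameMatrix_one {ε : ℝ} (hε : ε ≤ 1/3) {μ : Fin 2 → ℝ}
    (hμ : μ ∈ stdSimplex ℝ (Fin 2)) (hμ1 : μ 0 ≤ 1/2) :
    1/2 + ε/2 ≤ ∑ a, μ a * gameMatrix ε a 1 := by
  have hsum : μ 0 + μ 1 = 1 := by simpa using hμ.2
  simp only [gameMatrix, Fin.sum_univ_two, Matrix.cons_val_zero, Matrix.cons_val_one,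
    Matrix.cons_val_fin_one]
  nlinarith [mul_nonneg (sub_nonneg.2 hμ1) (sub_nonneg.2 hε)]

theorem stmt11_general (ε : ℝ) (hε : ε ∈ Set.Icc (-(1/12) : ℝ) (1/12))
    (μ : Fin 2 → ℝ) (hμ : μ ∈ stdSimplex ℝ (Fin 2)) (hμ1 : μ 0 ≤ 1/2)
    (ν : Fin 2 → ℝ) (hν : ν ∈ stdSimplex ℝ (Fin 2)) :
    ε / 2 ≤
      (⨆ ν' : stdSimplex ℝ (Fin 2), ∑ a, ∑ b,
        μ a * (ν' : Fin 2 → ℝ) b *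
          (![![2/3 - ε, 1/3 + ε], ![1/3, 2/3]] : Fin 2 → Fin 2 → ℝ) a b) -
      (⨅ μ' : stdSimplex ℝ (Fin 2), ∑ a, ∑ b,
        (μ' : Fin 2 → ℝ) a * ν b *
          (![![2/3 - ε, 1/3 + ε], ![1/3, 2/3]] : Fin 2 → Fin 2 → ℝ) a b) := by
  obtain ⟨-, hε⟩ := hε
  have hvalue : bilinPayoff (gameMatrix ε) (equalizingStrategy ε) ν = 1/2 :=
    bilinPayoff_eq_of_forall_sum_mul_eq _ (sum_equalizingStrategy_mul_gameMatrix (by linarith))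
      hν.2
  have hbest : 1/2 + ε/2 ≤ bilinPayoff (gameMatrix ε) μ (Pi.single 1 1) := by
    rw [bilinPayoff_single_right]
    exact le_sum_mul_gameMatrix_one (by linarith) hμ hμ1
  calc ε / 2 ≤ bilinPayoff (gameMatrix ε) μ (Pi.single 1 1)
        - bilinPayoff (gameMatrix ε) (equalizingStrategy ε) ν := by linarith
    _ ≤ exploitabilityGap (gameMatrix ε) μ ν :=
      bilinPayoff_sub_le_exploitabilityGap _ _ _
        (equalizingStrategy_mem_stdSimplex (by linarith)) (single_mem_stdSimplex ℝ 1)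

theorem stmt11 (ε : ℝ) (hε : ε ∈ Set.Icc (-(1/12) : ℝ) (1/12)) (hε0 : 0 ≤ ε)
    (μ : Fin 2 → ℝ) (hμ : μ ∈ stdSimplex ℝ (Fin 2)) (hμ1 : μ 0 ≤ 1/2)
    (ν : Fin 2 → ℝ) (hν : ν ∈ stdSimplex ℝ (Fin 2)) :
    ε / 2 ≤
      (⨆ ν' : stdSimplex ℝ (Fin 2), ∑ a, ∑ b,
        μ a * (ν' : Fin 2 → ℝ) b *
          (![![2/3 - ε, 1/3 + ε], ![1/3, 2/3]] : Fin 2 → Fin 2 → ℝ) a b) -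
      (⨅ μ' : stdSimplex ℝ (Fin 2), ∑ a, ∑ b,
        (μ' : Fin 2 → ℝ) a * ν b *
          (![![2/3 - ε, 1/3 + ε], ![1/3, 2/3]] : Fin 2 → Fin 2 → ℝ) a b) :=
  stmt11_general ε hε μ hμ hμ1 ν hν

end
end

section
/- Let h(μ) = Σ_a μ(a)(log μ(a) − 1) be the (shifted) negative entropy on the simplex Δ_A, with Bregman divergence D(μ,μ′) = KL(μ,μ′). Let μ ∈ Δ_A with μ(a) > 0 for all a, let ℓ̂ ∈ ℝ^A_{≥0}, η > 0, and define the unprojected exponential-weights update μ̃(a) = μ(a) e^{−η ℓ̂(a)}. If ℓ̂(a) = (ℓ/μ(a))·1{a = a₀} for some a₀ ∈ A and ℓ ∈ [0,1], and a₀ is drawn with a₀ ~ μ, then E[KL(μ, μ̃)] ≤ η² A / 2. -/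
lemma key_ineq (x : ℝ) (hx : 0 ≤ x) : x + Real.exp (-x) - 1 ≤ x ^ 2 / 2 := by
  have hmono : MonotoneOn (fun y : ℝ => y ^ 2 / 2 - (y + Real.exp (-y) - 1))
      (Set.Ici (0:ℝ)) := by
    apply monotoneOn_of_deriv_nonneg (convex_Ici 0)
    · fun_prop
    · fun_prop
    · intro y hy
      simp only [interior_Ici, Set.mem_Ioi] at hy
      have hd : deriv (fun y : ℝ => y ^ 2 / 2 - (y + Real.exp (-y) - 1)) y
          = y - (1 - Real.exp (-y)) := by
        have : HasDerivAt (fun y : ℝ => y ^ 2 / 2 - (y + Real.exp (-y) - 1))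
            (y - (1 + Real.exp (-y) * (-1))) y := by
          have h1 : HasDerivAt (fun y : ℝ => y ^ 2 / 2) y y := by
            simpa using ((hasDerivAt_pow 2 y).div_const 2)
          have h2 : HasDerivAt (fun y : ℝ => Real.exp (-y)) (Real.exp (-y) * (-1)) y :=
            (Real.hasDerivAt_exp (-y)).comp y (hasDerivAt_neg y)
          exact h1.sub (((hasDerivAt_id y).add h2).sub_const 1)
        rw [this.deriv]; ring
      rw [hd]
      have := Real.add_one_le_exp (-y)
      nlinarith
  have h0 := hmono (Set.self_mem_Ici) (Set.mem_Ici.mpr hx) hx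
  simp at h0
  nlinarith

theorem stmt14 {A : Type*} [Fintype A] [DecidableEq A]
    (μ : A → ℝ) (hμ : μ ∈ stdSimplex ℝ A) (hpos : ∀ a, 0 < μ a)
    (ℓ : A → ℝ) (hℓ : ∀ a, ℓ a ∈ Set.Icc (0:ℝ) 1) (η : ℝ) (hη : 0 < η) :
    ∑ a₀, μ a₀ *
      ((∑ a, μ a * (η * (if a = a₀ then ℓ a₀ / μ a else 0))) +
       (∑ a, μ a * (Real.exp (-(η * (if a = a₀ then ℓ a₀ / μ a else 0))) - 1))) ≤
      η ^ 2 * (Fintype.card A) / 2 := by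
  have hbound : ∀ a₀ : A, μ a₀ *
      ((∑ a, μ a * (η * (if a = a₀ then ℓ a₀ / μ a else 0))) +
       (∑ a, μ a * (Real.exp (-(η * (if a = a₀ then ℓ a₀ / μ a else 0))) - 1))) ≤
      η ^ 2 / 2 := by
    intro a₀
    have h1 : (∑ a, μ a * (η * (if a = a₀ then ℓ a₀ / μ a else 0)))
        = η * ℓ a₀ := by
      rw [Finset.sum_eq_single a₀]
      · field_simp
        rw [if_pos trivial, mul_div_assoc', mul_div_cancel_left₀ _ (hpos a₀).ne']
      · intro b _ hb; simp [hb]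
      · simp
    have h2 : (∑ a, μ a * (Real.exp (-(η * (if a = a₀ then ℓ a₀ / μ a else 0))) - 1))
        = μ a₀ * (Real.exp (-(η * (ℓ a₀ / μ a₀))) - 1) := by
      rw [Finset.sum_eq_single a₀]
      · simp
      · intro b _ hb; simp [hb]
      · simp
    rw [h1, h2]
    set x : ℝ := η * (ℓ a₀ / μ a₀) with hxdef
    have hμ0 := hpos a₀
    have hℓ0 := (hℓ a₀).1
    have hℓ1 := (hℓ a₀).2
    have hx : 0 ≤ x := by positivity
    have hkey := key_ineq x hx
    have hxval : μ a₀ * x = η * ℓ a₀ := by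
      rw [hxdef]; field_simp
    have hexp : 0 < Real.exp (-x) := Real.exp_pos _
    -- μ a₀ * (η ℓ a₀ + μ a₀ (e^{-x}-1)) = μ a₀ ^2 * (x + e^{-x} -1)
    have heq : μ a₀ * (η * ℓ a₀ + μ a₀ * (Real.exp (-x) - 1))
        = μ a₀ ^ 2 * (x + Real.exp (-x) - 1) := by
      rw [← hxval]; ring
    rw [heq]
    have hμ1 : μ a₀ ≤ 1 := by
      have := hμ.2
      calc μ a₀ ≤ ∑ a, μ a := Finset.single_le_sum (fun a _ => (hpos a).le) (Finset.mem_univ a₀)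
        _ = 1 := hμ.2
    have hstep : μ a₀ ^ 2 * (x + Real.exp (-x) - 1) ≤ μ a₀ ^ 2 * (x ^ 2 / 2) := by
      apply mul_le_mul_of_nonneg_left hkey (by positivity)
    have hx2 : μ a₀ ^ 2 * (x ^ 2 / 2) = (η * ℓ a₀) ^ 2 / 2 := by
      have : (μ a₀ * x) ^ 2 = (η * ℓ a₀) ^ 2 := by rw [hxval]
      nlinarith [this]
    nlinarith [hstep, hx2, sq_nonneg (η * ℓ a₀), mul_le_one₀ hℓ1 hℓ0 hℓ1]
  calc ∑ a₀, μ a₀ * _ ≤ ∑ _a₀ : A, η ^ 2 / 2 := Finset.sum_le_sum (fun a₀ _ => hbound a₀)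
    _ = η ^ 2 * (Fintype.card A) / 2 := by
      rw [Finset.sum_const, Finset.card_univ]; ring
end
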